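/- arXiv:2001.01123 — 3 statements merged into one kernel-verified Lean document; each statement's English description precedes it below -/
import Mathlib

section
/- With p = 0.15 and q = 0.85, one has (1 + √(q/p))²·|q − Φ(√(q/p))| > 1.6153, where Φ is the standard normal distribution function. -/
/-!
For `x ≤ 0` the Taylor partial sums of `exp x` with an even number of terms lie below `exp x`
(the remainders alternate in sign, by induction on the number of terms and monotonicity).
Integrating such a sum of `exp (-t² / 2)` over `[0, x]` bounds
`Φ x = 1/2 + (2π)^{-1/2} ∫₀ˣ e^{-t²/2}` from below by an explicit multiple of `x`; at
`x = √(17/3) = √(q/p)` this gives `Φ x ≥ 0.991354 > q`, and the claim follows from `(1 + x)² = 20/3 + 2x`.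
-/

/-- The standard normal distribution function. -/
noncomputable def Phi (x : ℝ) : ℝ :=
  (Real.sqrt (2 * Real.pi))⁻¹ * ∫ t in Set.Iio x, Real.exp (-t ^ 2 / 2)

open Real Set Finset MeasureTheory
open scoped Nat

theorem hasDerivAt_sum_range_pow_div_factorial (n : ℕ) (x : ℝ) :
    HasDerivAt (fun y : ℝ => ∑ i ∈ range (n + 1), y ^ i / i !)
      (∑ i ∈ range n, x ^ i / i !) x := by
  have hterm : ∀ i ∈ range n,
      HasDerivAt (fun y : ℝ => y ^ (i + 1) / (i + 1)!) (x ^ i / i !) x := by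
    intro i _
    refine ((hasDerivAt_pow (i + 1) x).div_const ((i + 1)! : ℝ)).congr_deriv ?_
    push_cast [Nat.factorial_succ]
    field_simp
  simpa only [sum_range_succ', pow_zero, Nat.factorial_zero, Nat.cast_one, div_one, add_zero]
    using (HasDerivAt.fun_sum hterm).add_const 1

theorem neg_one_pow_mul_exp_sub_sum_nonneg (n : ℕ) {x : ℝ} (hx : x ≤ 0) :
    0 ≤ (-1) ^ n * (exp x - ∑ i ∈ range n, x ^ i / i !) := by
  induction n generalizing x with
  | zero => simpa using (exp_pos x).le
  | succ n ih =>
    set f : ℝ → ℝ := fun y => (-1) ^ (n + 1) * (exp y - ∑ i ∈ range (n + 1), y ^ i / i !)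
    have hf : ∀ y, HasDerivAt f (-((-1) ^ n * (exp y - ∑ i ∈ range n, y ^ i / i !))) y := by
      intro y
      refine (((hasDerivAt_exp y).sub (hasDerivAt_sum_range_pow_div_factorial n y)).const_mul
        ((-1 : ℝ) ^ (n + 1))).congr_deriv ?_
      ring
    have hanti : AntitoneOn f (Iic 0) := by
      refine antitoneOn_of_deriv_nonpos (convex_Iic 0)
        (fun y _ => (hf y).continuousAt.continuousWithinAt)
        (fun y _ => (hf y).differentiableAt.differentiableWithinAt) fun y hy => ?_
      rw [(hf y).deriv, neg_nonpos]
      exact ih (interior_subset (s := Iic 0) hy)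
    have hf0 : f 0 = 0 := by
      simp [f, sum_range_succ']
    simpa [hf0] using hanti hx self_mem_Iic hx

theorem sum_range_two_mul_le_exp_of_nonpos (n : ℕ) {x : ℝ} (hx : x ≤ 0) :
    ∑ i ∈ range (2 * n), x ^ i / i ! ≤ exp x := by
  simpa [pow_mul] using neg_one_pow_mul_exp_sub_sum_nonneg (2 * n) hx

theorem integral_sum_range_neg_sq_div_two_pow (n : ℕ) (x : ℝ) :
    ∫ t in (0 : ℝ)..x, ∑ i ∈ range n, (-t ^ 2 / 2) ^ i / i ! =
      ∑ i ∈ range n, (-1 / 2) ^ i * x ^ (2 * i + 1) / (i ! * (2 * i + 1)) := by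
  rw [intervalIntegral.integral_finsetSum fun i _ =>
    (by fun_prop : Continuous _).intervalIntegrable _ _]
  refine sum_congr rfl fun i _ => ?_
  have hterm : (fun t : ℝ => (-t ^ 2 / 2) ^ i / i !) =
      fun t => (-1 / 2 : ℝ) ^ i / i ! * t ^ (2 * i) := by
    funext t; rw [pow_mul]; ring
  rw [hterm, intervalIntegral.integral_const_mul, integral_pow]
  push_cast
  field_simp
  ring

theorem sum_le_integral_exp_neg_sq_div_two (n : ℕ) {x : ℝ} (hx : 0 ≤ x) :
    ∑ i ∈ range (2 * n), (-1 / 2) ^ i * x ^ (2 * i + 1) / (i ! * (2 * i + 1)) ≤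
      ∫ t in (0 : ℝ)..x, exp (-t ^ 2 / 2) := by
  rw [← integral_sum_range_neg_sq_div_two_pow]
  refine intervalIntegral.integral_mono_on hx ((by fun_prop : Continuous _).intervalIntegrable _ _)
    ((by fun_prop : Continuous _).intervalIntegrable _ _) fun t _ => ?_
  exact sum_range_two_mul_le_exp_of_nonpos n (by nlinarith [sq_nonneg t])

theorem integral_Iic_zero_exp_neg_sq_div_two :
    ∫ t in Iic (0 : ℝ), exp (-t ^ 2 / 2) = √(2 * π) / 2 := by
  have h := integral_comp_neg_Iic (0 : ℝ) fun t => exp (-(1 / 2) * t ^ 2)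
  rw [neg_zero, integral_gaussian_Ioi, div_div_eq_mul_div, div_one, mul_comm π] at h
  simpa [neg_div, div_eq_inv_mul] using h

theorem Phi_eq_half_add (x : ℝ) :
    Phi x = 1 / 2 + (√(2 * π))⁻¹ * ∫ t in (0 : ℝ)..x, exp (-t ^ 2 / 2) := by
  have hintegrable : Integrable fun t : ℝ => exp (-t ^ 2 / 2) := by
    simpa [neg_div, div_eq_inv_mul] using integrable_exp_neg_mul_sq (b := 1 / 2) (by norm_num)
  have hsplit := intervalIntegral.integral_Iic_sub_Iic (a := 0) (b := x)
    hintegrable.integrableOn hintegrable.integrableOn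
  have hpos : 0 < √(2 * π) := by positivity
  rw [Phi, setIntegral_congr_set Iio_ae_eq_Iic, ← hsplit, integral_Iic_zero_exp_neg_sq_div_two]
  field_simp
  ring

theorem le_sqrt_seventeen_thirds : 2.380476 ≤ √(17 / 3 : ℝ) :=
  le_sqrt_of_sq_le (by norm_num)

/- The claimed bound is within `5·10⁻⁵` of the true value `≈ 1.61535`, which is why sixteen
Taylor terms and seven-digit constants are needed. -/
theorem Phi_sqrt_seventeen_thirds_ge : 0.991354 ≤ Phi √(17 / 3) := by
  set x := √(17 / 3)
  have hx0 : 0 ≤ x := sqrt_nonneg _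
  have hxsq : x ^ 2 = 17 / 3 := sq_sqrt (by norm_num)
  have hxlb : 2.380476 ≤ x := le_sqrt_seventeen_thirds
  have hsqrt_pi : √(2 * π) ≤ 2.5066285 := sqrt_le_iff.mpr ⟨by norm_num, by nlinarith [pi_lt_d6]⟩
  have hseries : ∑ i ∈ range (2 * 8), (-1 / 2 : ℝ) ^ i * x ^ (2 * i + 1) / (i ! * (2 * i + 1)) =
      (∑ i ∈ range 16, (-17 / 6 : ℝ) ^ i / (i ! * (2 * i + 1))) * x := by
    rw [sum_mul]
    refine sum_congr rfl fun i _ => ?_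
    rw [pow_succ, pow_mul, hxsq, show (-17 / 6 : ℝ) = -1 / 2 * (17 / 3) by norm_num, mul_pow]
    ring
  have hcoeff : (0.5173939 : ℝ) ≤ ∑ i ∈ range 16, (-17 / 6 : ℝ) ^ i / (i ! * (2 * i + 1)) := by
    norm_num [sum_range_succ, Nat.factorial]
  have hintegral := sum_le_integral_exp_neg_sq_div_two 8 hx0
  rw [hseries] at hintegral
  have hpos : 0 < √(2 * π) := by positivity
  rw [Phi_eq_half_add, ← div_eq_inv_mul, ← sub_le_iff_le_add', le_div_iff₀ hpos]
  nlinarith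

/-- With `p = 0.15`, `q = 0.85`: `(1 + √(q/p))²·|q − Φ(√(q/p))| > 1.6153`. -/
theorem lower_bound_A_numeric :
    (1 + Real.sqrt (0.85 / 0.15)) ^ 2 * |0.85 - Phi (Real.sqrt (0.85 / 0.15))| >
      1.6153 := by
  have hPhi := Phi_sqrt_seventeen_thirds_ge
  rw [show (0.85 / 0.15 : ℝ) = 17 / 3 by norm_num, abs_of_neg (by linarith)]
  nlinarith [le_sqrt_seventeen_thirds]
end

section
/- Suppose that for some constants s ≥ 0, δ ∈ [0,1], and K ≥ 0 the structural Nagaev–Bikelis inequality holds: for all n and all independent centered Xₖ with finite (2+δ)-th moments, sup_x (1+|x|^{2+δ})·|P(Sₙ < xBₙ) − Φ(x)| ≤ K·(L_{2+δ,n} + s·T_{2+δ,n}). Then for every p ∈ (0,1) with q = 1−p: K ≥ q^{δ/2}·(p^{1+δ/2} + q^{1+δ/2})/(p^{1+δ} + q^{1+δ} + s(pq)^{δ/2})·|1 − (1/p)·Φ(−√(q/p))|. -/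
/-!
Test the inequality with `n = 1` and the centered, unit-variance two-point variable `X` taking
the value `√(q/p)` with probability `p` and `-√(p/q)` with probability `q`.  Its Lyapunov ratio is
`L = (p^{1+δ} + q^{1+δ}) / (pq)^{δ/2}` and `T = 1`, while at `x = √(q/p)` the event `{X < x}` has
probability `q`, so that `|P(X < x) - Φ(x)| = |Φ(-x) - p|`.  Solving the resulting inequality for
`K` gives the bound.
-/

open MeasureTheory ProbabilityTheory

lemma integrable_exp_neg_sq_div_two : Integrable (fun t : ℝ => Real.exp (-t ^ 2 / 2)) := by
  simpa [neg_div, div_eq_inv_mul] using integrable_exp_neg_mul_sq (by norm_num : (0:ℝ) < 1/2)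

lemma integral_exp_neg_sq_div_two : ∫ t : ℝ, Real.exp (-t ^ 2 / 2) = √(2 * Real.pi) := by
  simpa [neg_div, div_eq_inv_mul, div_div_eq_mul_div, mul_comm] using integral_gaussian (1/2 : ℝ)

lemma Phi_add_Phi_neg (x : ℝ) : Phi x + Phi (-x) = 1 := by
  have hint := integrable_exp_neg_sq_div_two
  have hreflect : ∫ t in Set.Iio (-x), Real.exp (-t ^ 2 / 2)
      = ∫ t in Set.Ioi x, Real.exp (-t ^ 2 / 2) := by
    rw [← integral_Iic_eq_integral_Iio, ← integral_comp_neg_Ioi]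
    simp only [even_two, Even.neg_pow]
  have hsplit := intervalIntegral.integral_Iic_add_Ioi (b := x) hint.integrableOn hint.integrableOn
  rw [integral_Iic_eq_integral_Iio, integral_exp_neg_sq_div_two] at hsplit
  rw [Phi, Phi, hreflect, ← mul_add, hsplit, inv_mul_cancel₀ (by positivity)]

lemma abs_one_sub_sub_Phi {p : ℝ} (hp : 0 < p) (x : ℝ) :
    |1 - p - Phi x| = p * |1 - 1 / p * Phi (-x)| := by
  have hsym : 1 - p - Phi x = -(p * (1 - 1 / p * Phi (-x))) := by
    field_simp
    linarith [Phi_add_Phi_neg x]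
  rw [hsym, abs_neg, abs_mul, abs_of_pos hp]

lemma sqrt_rpow_two_add {x : ℝ} (hx : 0 ≤ x) (δ : ℝ) : √x ^ (2 + δ) = x ^ (1 + δ / 2) := by
  rw [← Real.rpow_div_two_eq_sqrt _ hx, add_div, div_self two_ne_zero]

lemma rpow_one_add_half {x : ℝ} (hx : 0 < x) (r : ℝ) : x ^ (1 + r / 2) = x * x ^ (r / 2) := by
  rw [Real.rpow_add hx, Real.rpow_one]

lemma rpow_one_add_eq_mul_rpow_half_mul {x : ℝ} (hx : 0 < x) (r : ℝ) :
    x ^ (1 + r) = x * x ^ (r / 2) * x ^ (r / 2) := by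
  rw [Real.rpow_add hx, Real.rpow_one, mul_assoc, ← Real.rpow_add hx, add_halves]

def NagaevBikelisInequality (s δ K : ℝ) : Prop :=
  ∀ (Ω : Type) (_ : MeasurableSpace Ω) (μ : Measure Ω),
    IsProbabilityMeasure μ →
    ∀ (n : ℕ) (X : Fin n → Ω → ℝ),
    iIndepFun X μ →
    (∀ k, Measurable (X k)) →
    (∀ k, (∫ ω, X k ω ∂μ) = 0) →
    (∀ k, Integrable (fun ω => |X k ω| ^ (2 + δ)) μ) →
    ∀ Bn : ℝ, 0 < Bn → Bn ^ 2 = (∑ k, ∫ ω, (X k ω) ^ 2 ∂μ) →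
    ∀ x : ℝ,
      (1 + |x| ^ (2 + δ)) * |(μ {ω | (∑ k, X k ω) < x * Bn}).toReal - Phi x| ≤
        K * ((∑ k, ∫ ω, |X k ω| ^ (2 + δ) ∂μ) / Bn ^ (2 + δ) +
          s * ((∑ k, (∫ ω, (X k ω) ^ 2 ∂μ) ^ ((2 + δ) / 2)) / Bn ^ (2 + δ)))

lemma NagaevBikelisInequality.apply_single {s δ K : ℝ} (h : NagaevBikelisInequality s δ K)
    {Ω : Type} [MeasurableSpace Ω] {μ : Measure Ω} [IsProbabilityMeasure μ] {X : Ω → ℝ}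
    (hX : Measurable X) (hmean : ∫ ω, X ω ∂μ = 0) (hvar : ∫ ω, X ω ^ 2 ∂μ = 1)
    (hint : Integrable (fun ω => |X ω| ^ (2 + δ)) μ) (x : ℝ) :
    (1 + |x| ^ (2 + δ)) * |(μ {ω | X ω < x}).toReal - Phi x|
      ≤ K * (∫ ω, |X ω| ^ (2 + δ) ∂μ + s) := by
  simpa [hvar] using h Ω _ μ inferInstance 1 (fun _ => X) iIndepFun.of_subsingleton
    (fun _ => hX) (fun _ => hmean) (fun _ => hint) 1 one_pos (by simp [hvar]) x

noncomputable def twoPointMeasure (p : ℝ) : Measure Bool :=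
  ENNReal.ofReal p • Measure.dirac true + ENNReal.ofReal (1 - p) • Measure.dirac false

noncomputable def twoPointVar (p : ℝ) (ω : Bool) : ℝ :=
  cond ω √((1 - p) / p) (-√(p / (1 - p)))

section TwoPoint

variable {p : ℝ}

@[simp] lemma twoPointMeasure_singleton_true : twoPointMeasure p {true} = ENNReal.ofReal p := by
  simp [twoPointMeasure]

@[simp] lemma twoPointMeasure_singleton_false :
    twoPointMeasure p {false} = ENNReal.ofReal (1 - p) := by
  simp [twoPointMeasure]

lemma isProbabilityMeasure_twoPointMeasure (hp0 : 0 ≤ p) (hp1 : p ≤ 1) :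
    IsProbabilityMeasure (twoPointMeasure p) := by
  constructor
  simp [twoPointMeasure, ← ENNReal.ofReal_add hp0 (sub_nonneg.2 hp1)]

lemma integral_twoPointMeasure (hp0 : 0 ≤ p) (hp1 : p ≤ 1) (f : Bool → ℝ) :
    ∫ ω, f ω ∂twoPointMeasure p = p * f true + (1 - p) * f false := by
  have := isProbabilityMeasure_twoPointMeasure hp0 hp1
  rw [integral_fintype Integrable.of_finite]
  simp [measureReal_def, hp0, hp1]

variable (hp : p ∈ Set.Ioo 0 1)
include hp

lemma integral_twoPointVar : ∫ ω, twoPointVar p ω ∂twoPointMeasure p = 0 := by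
  obtain ⟨hp0, hp1⟩ := hp
  have hq0 : 0 < 1 - p := sub_pos.2 hp1
  rw [integral_twoPointMeasure hp0.le hp1.le]
  simp only [twoPointVar, cond_true, cond_false]
  rw [Real.sqrt_div' _ hp0.le, Real.sqrt_div' _ hq0.le]
  have := Real.sq_sqrt hp0.le
  have := Real.sq_sqrt hq0.le
  have : 0 < √p := by positivity
  have : 0 < √(1 - p) := by positivity
  field_simp
  nlinarith

lemma integral_twoPointVar_sq : ∫ ω, twoPointVar p ω ^ 2 ∂twoPointMeasure p = 1 := by
  obtain ⟨hp0, hp1⟩ := hp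
  have hq0 : 0 < 1 - p := sub_pos.2 hp1
  rw [integral_twoPointMeasure hp0.le hp1.le]
  simp only [twoPointVar, cond_true, cond_false, neg_sq]
  rw [Real.sq_sqrt (by positivity), Real.sq_sqrt (by positivity)]
  field_simp
  ring

lemma integral_abs_twoPointVar_rpow (δ : ℝ) :
    ∫ ω, |twoPointVar p ω| ^ (2 + δ) ∂twoPointMeasure p
      = (p ^ (1 + δ) + (1 - p) ^ (1 + δ)) / (p * (1 - p)) ^ (δ / 2) := by
  obtain ⟨hp0, hp1⟩ := hp
  have hq0 : 0 < 1 - p := sub_pos.2 hp1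
  rw [integral_twoPointMeasure hp0.le hp1.le]
  simp only [twoPointVar, cond_true, cond_false, abs_neg, abs_of_nonneg (Real.sqrt_nonneg _)]
  rw [sqrt_rpow_two_add (by positivity), sqrt_rpow_two_add (by positivity),
    Real.div_rpow hq0.le hp0.le, Real.div_rpow hp0.le hq0.le, Real.mul_rpow hp0.le hq0.le,
    rpow_one_add_half hp0, rpow_one_add_half hq0, rpow_one_add_eq_mul_rpow_half_mul hp0,
    rpow_one_add_eq_mul_rpow_half_mul hq0]
  have : 0 < p ^ (δ / 2) := Real.rpow_pos_of_pos hp0 _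
  have : 0 < (1 - p) ^ (δ / 2) := Real.rpow_pos_of_pos hq0 _
  field_simp
  ring

lemma twoPointMeasure_twoPointVar_lt :
    (twoPointMeasure p {ω | twoPointVar p ω < √((1 - p) / p)}).toReal = 1 - p := by
  obtain ⟨hp0, hp1⟩ := hp
  have hq0 : 0 < 1 - p := sub_pos.2 hp1
  have hevent : {ω | twoPointVar p ω < √((1 - p) / p)} = {false} := by
    ext ω
    cases ω
    · simp only [twoPointVar, cond_false, Set.mem_ofPred_eq, Set.mem_singleton_iff, iff_true]
      have : 0 < √((1 - p) / p) := by positivity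
      linarith [Real.sqrt_nonneg (p / (1 - p))]
    · simp [twoPointVar]
  rw [hevent, twoPointMeasure_singleton_false, ENNReal.toReal_ofReal hq0.le]

lemma le_of_twoPoint_bound {s δ K M : ℝ} (hs : 0 ≤ s)
    (h : (1 + ((1 - p) / p) ^ (1 + δ / 2)) * (p * M)
      ≤ K * ((p ^ (1 + δ) + (1 - p) ^ (1 + δ)) / (p * (1 - p)) ^ (δ / 2) + s)) :
    (1 - p) ^ (δ / 2) * ((p ^ (1 + δ / 2) + (1 - p) ^ (1 + δ / 2)) /
      (p ^ (1 + δ) + (1 - p) ^ (1 + δ) + s * (p * (1 - p)) ^ (δ / 2))) * M ≤ K := by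
  obtain ⟨hp0, hp1⟩ := hp
  have hq0 : 0 < 1 - p := sub_pos.2 hp1
  rw [Real.div_rpow hq0.le hp0.le] at h
  rw [Real.mul_rpow hp0.le hq0.le] at h ⊢
  rw [rpow_one_add_half hp0, rpow_one_add_half hq0, rpow_one_add_eq_mul_rpow_half_mul hp0,
    rpow_one_add_eq_mul_rpow_half_mul hq0] at h ⊢
  set P := p ^ (δ / 2)
  set Q := (1 - p) ^ (δ / 2)
  have hP : 0 < P := Real.rpow_pos_of_pos hp0 _
  have hQ : 0 < Q := Real.rpow_pos_of_pos hq0 _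
  have hD : 0 < p * P * P + (1 - p) * Q * Q + s * (P * Q) := by positivity
  rw [mul_div_assoc', div_mul_eq_mul_div, div_le_iff₀ hD]
  field_simp at h
  linarith

end TwoPoint

theorem nagaev_bikelis_const_lower_bound_general (s δ K : ℝ)
    (hs : 0 ≤ s)
    (hineq : ∀ (Ω : Type) (_ : MeasurableSpace Ω) (μ : Measure Ω),
      IsProbabilityMeasure μ →
      ∀ (n : ℕ) (X : Fin n → Ω → ℝ),
      iIndepFun X μ →
      (∀ k, Measurable (X k)) →
      (∀ k, (∫ ω, X k ω ∂μ) = 0) →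
      (∀ k, Integrable (fun ω => |X k ω| ^ (2 + δ)) μ) →
      ∀ Bn : ℝ, 0 < Bn → Bn ^ 2 = (∑ k, ∫ ω, (X k ω) ^ 2 ∂μ) →
      ∀ x : ℝ,
        (1 + |x| ^ (2 + δ)) * |(μ {ω | (∑ k, X k ω) < x * Bn}).toReal - Phi x| ≤
          K * ((∑ k, ∫ ω, |X k ω| ^ (2 + δ) ∂μ) / Bn ^ (2 + δ) +
            s * ((∑ k, (∫ ω, (X k ω) ^ 2 ∂μ) ^ ((2 + δ) / 2)) / Bn ^ (2 + δ)))) :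
    ∀ p : ℝ, p ∈ Set.Ioo (0 : ℝ) 1 →
      K ≥ (1 - p) ^ (δ / 2) *
          ((p ^ (1 + δ / 2) + (1 - p) ^ (1 + δ / 2)) /
            (p ^ (1 + δ) + (1 - p) ^ (1 + δ) + s * (p * (1 - p)) ^ (δ / 2))) *
          |1 - (1 / p) * Phi (-Real.sqrt ((1 - p) / p))| := by
  intro p hp
  have := isProbabilityMeasure_twoPointMeasure hp.1.le hp.2.le
  have key := NagaevBikelisInequality.apply_single (μ := twoPointMeasure p) hineq
    (measurable_of_countable _) (integral_twoPointVar hp) (integral_twoPointVar_sq hp)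
    Integrable.of_finite √((1 - p) / p)
  rw [twoPointMeasure_twoPointVar_lt hp, integral_abs_twoPointVar_rpow hp,
    abs_of_nonneg (Real.sqrt_nonneg _), sqrt_rpow_two_add (div_nonneg (sub_pos.2 hp.2).le hp.1.le),
    abs_one_sub_sub_Phi hp.1] at key
  exact le_of_twoPoint_bound hp hs key

/-- If constants `s ≥ 0`, `δ ∈ [0,1]`, `K ≥ 0` satisfy the structural
Nagaev–Bikelis inequality
`sup_x (1+|x|^{2+δ})·|P(Sₙ < xBₙ) − Φ(x)| ≤ K·(L_{2+δ,n} + s·T_{2+δ,n})`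
for all `n` and all independent centered `Xₖ` with finite `(2+δ)`-th moments,
then for every `p ∈ (0,1)`, `q = 1 − p`:
`K ≥ q^{δ/2}·(p^{1+δ/2}+q^{1+δ/2})/(p^{1+δ}+q^{1+δ}+s(pq)^{δ/2})·|1 − (1/p)Φ(−√(q/p))|`. -/
theorem nagaev_bikelis_const_lower_bound (s δ K : ℝ)
    (hs : 0 ≤ s) (hδ0 : 0 ≤ δ) (hδ1 : δ ≤ 1) (hK : 0 ≤ K)
    (hineq : ∀ (Ω : Type) (_ : MeasurableSpace Ω) (μ : Measure Ω),
      IsProbabilityMeasure μ →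
      ∀ (n : ℕ) (X : Fin n → Ω → ℝ),
      iIndepFun X μ →
      (∀ k, Measurable (X k)) →
      (∀ k, (∫ ω, X k ω ∂μ) = 0) →
      (∀ k, Integrable (fun ω => |X k ω| ^ (2 + δ)) μ) →
      ∀ Bn : ℝ, 0 < Bn → Bn ^ 2 = (∑ k, ∫ ω, (X k ω) ^ 2 ∂μ) →
      ∀ x : ℝ,
        (1 + |x| ^ (2 + δ)) * |(μ {ω | (∑ k, X k ω) < x * Bn}).toReal - Phi x| ≤
          K * ((∑ k, ∫ ω, |X k ω| ^ (2 + δ) ∂μ) / Bn ^ (2 + δ) +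
            s * ((∑ k, (∫ ω, (X k ω) ^ 2 ∂μ) ^ ((2 + δ) / 2)) / Bn ^ (2 + δ)))) :
    ∀ p : ℝ, p ∈ Set.Ioo (0 : ℝ) 1 →
      K ≥ (1 - p) ^ (δ / 2) *
          ((p ^ (1 + δ / 2) + (1 - p) ^ (1 + δ / 2)) /
            (p ^ (1 + δ) + (1 - p) ^ (1 + δ) + s * (p * (1 - p)) ^ (δ / 2))) *
          |1 - (1 / p) * Phi (-Real.sqrt ((1 - p) / p))| :=
  nagaev_bikelis_const_lower_bound_general s δ K hs hineq
end

section
/- For δ = 1 and p = 0.08, q = 0.92, one has q^{1/2}·(p^{3/2} + q^{3/2})/(p² + q²)·|1 − (1/p)·Φ(−√(q/p))| > 1.0135, where Φ is the standard normal distribution function. -/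
/-!
Substituting `t = -(a + s)` gives `Φ(-a) = φ(a) ∫₀^∞ e^{-as} e^{-s²/2} ds`. The Taylor
polynomials of `e^{-x}` of even degree lie above it on `x ≥ 0`, so integrating them term by
term against `e^{-as}` bounds `Φ(-a)` by an odd partial sum of the asymptotic series
`φ(a) ∑ (-1)^i (2i-1)!! / a^{2i+1}`. At `a = √(q/p) = √11.5` five terms give
`Φ(-a) ≤ 0.000349`, and the prefactor is at least `1.017944`; the product clears `1.0135`
by about `3·10⁻⁶`.
-/

open MeasureTheory Real Set Nat

lemma hasDerivAt_sum_range_neg_pow_div_factorial (n : ℕ) (x : ℝ) :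
    HasDerivAt (fun y : ℝ => ∑ i ∈ Finset.range (n + 1), (-y) ^ i / i !)
      (-∑ i ∈ Finset.range n, (-x) ^ i / i !) x := by
  induction n with
  | zero => simpa using hasDerivAt_const x (1 : ℝ)
  | succ n ih =>
    have hterm : HasDerivAt (fun y : ℝ => (-y) ^ (n + 1) / (n + 1)!) (-((-x) ^ n / n !)) x := by
      refine (((hasDerivAt_neg x).fun_pow (n + 1)).div_const ((n + 1)! : ℝ)).congr_deriv ?_
      rw [factorial_succ]
      push_cast
      field_simp
    simp_rw [Finset.sum_range_succ _ (n + 1)]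
    rw [Finset.sum_range_succ, neg_add]
    exact ih.fun_add hterm

/-- The `n`-th Taylor remainder `g n` of `e^{-x}` satisfies `(g (n + 1))' = -g n` and
`g (n + 1) 0 = 0`, so its sign on `[0, ∞)` alternates with `n`. -/
lemma neg_one_pow_mul_sum_range_sub_exp_neg_nonneg (n : ℕ) {x : ℝ} (hx : 0 ≤ x) :
    0 ≤ (-1) ^ (n + 1) * ((∑ i ∈ Finset.range n, (-x) ^ i / i !) - exp (-x)) := by
  induction n generalizing x with
  | zero => simpa using (exp_pos (-x)).le
  | succ n ih =>
    set h : ℝ → ℝ := fun y =>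
      (-1) ^ (n + 2) * ((∑ i ∈ Finset.range (n + 1), (-y) ^ i / i !) - exp (-y))
    have hderiv (y : ℝ) : HasDerivAt h
        ((-1) ^ (n + 1) * ((∑ i ∈ Finset.range n, (-y) ^ i / i !) - exp (-y))) y := by
      refine (((hasDerivAt_sum_range_neg_pow_div_factorial n y).sub
        (hasDerivAt_neg y).exp).const_mul ((-1 : ℝ) ^ (n + 2))).congr_deriv ?_
      ring
    have hmono : MonotoneOn h (Ici 0) := by
      refine monotoneOn_of_hasDerivWithinAt_nonneg (convex_Ici 0)
        (fun y _ => (hderiv y).continuousAt.continuousWithinAt)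
        (fun y _ => (hderiv y).hasDerivWithinAt) fun y hy => ih ?_
      rw [interior_Ici] at hy
      exact hy.le
    have h0 : h 0 = 0 := by simp [h, Finset.sum_range_succ']
    simpa [h, h0] using hmono self_mem_Ici hx hx

lemma exp_neg_le_sum_range_two_mul_add_one (n : ℕ) {x : ℝ} (hx : 0 ≤ x) :
    exp (-x) ≤ ∑ i ∈ Finset.range (2 * n + 1), (-x) ^ i / i ! := by
  have := neg_one_pow_mul_sum_range_sub_exp_neg_nonneg (2 * n + 1) hx
  rw [show 2 * n + 1 + 1 = 2 * (n + 1) by ring, pow_mul] at this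
  norm_num at this
  linarith

lemma setIntegral_Ioi_comp_add_right (a : ℝ) (f : ℝ → ℝ) :
    ∫ s in Ioi 0, f (s + a) = ∫ x in Ioi a, f x := by
  have he : MeasurableEmbedding fun s : ℝ => s + a :=
    (Homeomorph.addRight a).isClosedEmbedding.measurableEmbedding
  have h := he.setIntegral_map (μ := volume) f (Ioi a)
  rw [map_add_right_eq_self] at h
  rw [h, show (fun s : ℝ => s + a) ⁻¹' Ioi a = Ioi 0 by ext s; simp]

lemma integral_Iio_neg_exp_neg_sq_div_two (a : ℝ) :
    ∫ t in Iio (-a), exp (-t ^ 2 / 2) =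
      exp (-a ^ 2 / 2) * ∫ s in Ioi 0, exp (-(s ^ 2 / 2)) * exp (-(a * s)) := by
  rw [← integral_Iic_eq_integral_Iio, ← integral_comp_neg_Ioi,
    ← setIntegral_Ioi_comp_add_right, ← integral_const_mul]
  refine integral_congr_ae (ae_of_all _ fun s => ?_)
  simp only [← exp_add]
  ring_nf

lemma integral_pow_mul_exp_neg_mul_Ioi (k : ℕ) {r : ℝ} (hr : 0 < r) :
    ∫ s in Ioi 0, s ^ k * exp (-(r * s)) = k ! / r ^ (k + 1) := by
  have h := integral_rpow_mul_exp_neg_mul_Ioi (a := k + 1) (by positivity) hr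
  rw [add_sub_cancel_right, Gamma_nat_eq_factorial, ← Nat.cast_succ, rpow_natCast] at h
  simp only [rpow_natCast] at h
  rw [h, div_pow, one_pow]
  field_simp

lemma integrableOn_pow_mul_exp_neg_mul_Ioi (k : ℕ) {r : ℝ} (hr : 0 < r) :
    IntegrableOn (fun s => s ^ k * exp (-(r * s))) (Ioi 0) :=
  Integrable.of_integral_ne_zero <| by
    rw [integral_pow_mul_exp_neg_mul_Ioi k hr]
    positivity

lemma integral_exp_neg_sq_div_two_mul_exp_neg_mul_le (n : ℕ) {a : ℝ} (ha : 0 < a) :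
    ∫ s in Ioi 0, exp (-(s ^ 2 / 2)) * exp (-(a * s)) ≤
      ∑ i ∈ Finset.range (2 * n + 1), (-(1 / 2)) ^ i / i ! * ((2 * i)! / a ^ (2 * i + 1)) := by
  have hint (i : ℕ) : IntegrableOn
      (fun s => (-(1 / 2) : ℝ) ^ i / i ! * (s ^ (2 * i) * exp (-(a * s)))) (Ioi 0) :=
    (integrableOn_pow_mul_exp_neg_mul_Ioi (2 * i) ha).const_mul _
  have hpointwise (s : ℝ) : exp (-(s ^ 2 / 2)) * exp (-(a * s)) ≤
      ∑ i ∈ Finset.range (2 * n + 1), (-(1 / 2)) ^ i / i ! * (s ^ (2 * i) * exp (-(a * s))) := by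
    calc exp (-(s ^ 2 / 2)) * exp (-(a * s))
        ≤ (∑ i ∈ Finset.range (2 * n + 1), (-(s ^ 2 / 2)) ^ i / i !) * exp (-(a * s)) :=
          mul_le_mul_of_nonneg_right
            (exp_neg_le_sum_range_two_mul_add_one n (by positivity)) (exp_pos _).le
      _ = _ := by
          rw [Finset.sum_mul]
          refine Finset.sum_congr rfl fun i _ => ?_
          rw [pow_mul, show -(s ^ 2 / 2) = -(1 / 2) * s ^ 2 by ring, mul_pow]
          ring
  calc _ ≤ ∫ s in Ioi 0, ∑ i ∈ Finset.range (2 * n + 1),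
          (-(1 / 2)) ^ i / i ! * (s ^ (2 * i) * exp (-(a * s))) :=
        integral_mono_of_nonneg (ae_of_all _ fun s => by positivity)
          (integrable_finsetSum _ fun i _ => hint i) (ae_of_all _ hpointwise)
    _ = _ := by
        rw [integral_finsetSum _ fun i _ => hint i]
        refine Finset.sum_congr rfl fun i _ => ?_
        rw [integral_const_mul, integral_pow_mul_exp_neg_mul_Ioi _ ha]

lemma Phi_neg_le (n : ℕ) {a : ℝ} (ha : 0 < a) :
    Phi (-a) ≤ (√(2 * π))⁻¹ * exp (-a ^ 2 / 2) *
      ∑ i ∈ Finset.range (2 * n + 1), (-(1 / 2)) ^ i / i ! * ((2 * i)! / a ^ (2 * i + 1)) := by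
  rw [Phi, integral_Iio_neg_exp_neg_sq_div_two, ← mul_assoc]
  exact mul_le_mul_of_nonneg_left (integral_exp_neg_sq_div_two_mul_exp_neg_mul_le n ha)
    (by positivity)

lemma exp_neg_23_div_4_le : exp (-(23 / 4)) ≤ 0.003183 := by
  have hpow : exp (23 / 4) = exp (1 / 4) ^ 23 := by rw [← exp_nat_mul]; norm_num
  rw [exp_neg, hpow]
  calc (exp (1 / 4) ^ 23)⁻¹ ≤ ((∑ i ∈ Finset.range 7, (1 / 4 : ℝ) ^ i / i !) ^ 23)⁻¹ := by
        gcongr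
        exact sum_le_exp_of_nonneg (by norm_num) 7
    _ ≤ 0.003183 := by norm_num [Finset.sum_range_succ, factorial]

lemma rpow_three_div_two {x : ℝ} (hx : 0 ≤ x) : x ^ (3 / 2 : ℝ) = x * √x := by
  rw [show (3 / 2 : ℝ) = 1 + 1 / 2 by norm_num, rpow_add' hx (by norm_num), rpow_one,
    sqrt_eq_rpow]

lemma Phi_neg_sqrt_23_div_2_le : Phi (-√(23 / 2)) ≤ 0.000349 := by
  set a := √(23 / 2)
  have ha_sq : a ^ 2 = 23 / 2 := sq_sqrt (by norm_num)
  have ha : 3.3911 ≤ a := le_sqrt_of_sq_le (by norm_num)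
  have hpi : 2.506628 ≤ √(2 * π) := le_sqrt_of_sq_le (by linarith [pi_gt_d6])
  have hsum : ∑ i ∈ Finset.range (2 * 2 + 1),
      (-(1 / 2) : ℝ) ^ i / i ! * ((2 * i)! / a ^ (2 * i + 1)) = 260775 / 279841 / a := by
    simp_rw [pow_succ a, pow_mul a, ha_sq]
    norm_num [Finset.sum_range_succ, factorial]
    field_simp
    norm_num
  calc Phi (-a) ≤ (√(2 * π))⁻¹ * exp (-(23 / 4)) * (260775 / 279841 / a) := by
        simpa only [hsum, ha_sq, show (-(23 / 2) / 2 : ℝ) = -(23 / 4) by norm_num]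
          using Phi_neg_le 2 (by positivity : 0 < a)
    _ ≤ 2.506628⁻¹ * 0.003183 * (260775 / 279841 / 3.3911) := by
        gcongr
        exact exp_neg_23_div_4_le
    _ ≤ 0.000349 := by norm_num

lemma prefactor_ge :
    1.017944 ≤ √0.92 * (((0.08 : ℝ) ^ (3 / 2 : ℝ) + (0.92 : ℝ) ^ (3 / 2 : ℝ)) /
        ((0.08 : ℝ) ^ 2 + (0.92 : ℝ) ^ 2)) := by
  have h08 : 0.2828427 ≤ √0.08 := le_sqrt_of_sq_le (by norm_num)
  have h92 : 0.9591663 ≤ √0.92 := le_sqrt_of_sq_le (by norm_num)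
  rw [rpow_three_div_two (by norm_num), rpow_three_div_two (by norm_num)]
  calc (1.017944 : ℝ)
      ≤ 0.9591663 * ((0.08 * 0.2828427 + 0.92 * 0.9591663) / (0.08 ^ 2 + 0.92 ^ 2)) := by
        norm_num
    _ ≤ _ := by gcongr

/-- For `δ = 1`, `p = 0.08`, `q = 0.92`:
`q^{1/2}·(p^{3/2} + q^{3/2})/(p² + q²)·|1 − (1/p)·Φ(−√(q/p))| > 1.0135`. -/
theorem lower_bound_K0_one_numeric :
    Real.sqrt 0.92 * (((0.08 : ℝ) ^ (3 / 2 : ℝ) + (0.92 : ℝ) ^ (3 / 2 : ℝ)) /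
        ((0.08 : ℝ) ^ 2 + (0.92 : ℝ) ^ 2)) *
      |1 - (1 / 0.08) * Phi (-Real.sqrt (0.92 / 0.08))| > 1.0135 := by
  rw [show (0.92 / 0.08 : ℝ) = 23 / 2 by norm_num]
  have hPhi := Phi_neg_sqrt_23_div_2_le
  have hfactor : 1 - 1 / 0.08 * 0.000349 ≤ 1 - 1 / 0.08 * Phi (-√(23 / 2)) := by gcongr
  rw [abs_of_nonneg (by linarith)]
  calc (1.0135 : ℝ) < 1.017944 * (1 - 1 / 0.08 * 0.000349) := by norm_num
    _ ≤ _ := by gcongr; exact prefactor_ge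
end
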